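/- arXiv:1512.03037 — 3 statements merged into one kernel-verified Lean document; each statement's English description precedes it below -/
import Mathlib

section
/- Let G be a finite abelian group of order n ≥ 2. If every element x of G satisfies px = 0 for p = 2 or for p = 3 (i.e., G is an elementary abelian 2-group or an elementary abelian 3-group), then G has no nonempty 3-independent subset, so s(G,3) = 0. Otherwise, n/9 ≤ s(G,3) ≤ n/4. -/
/-- A subset `A` of an (additive) abelian group is `t`-independent if whenever
`λ₁a₁ + ⋯ + λₘaₘ = 0` with `a₁, …, aₘ` the (distinct) elements of `A` and
`|λ₁| + ⋯ + |λₘ| ≤ t`, all coefficients `λᵢ` vanish. -/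
def IsTIndep {G : Type*} [AddCommGroup G] (t : ℕ) (A : Finset G) : Prop :=
  ∀ c : G → ℤ, (∀ x ∉ A, c x = 0) →
    (∑ x ∈ A, |c x|) ≤ (t : ℤ) →
    (∑ x ∈ A, c x • x) = 0 → ∀ x, c x = 0

/-- `sIndep G t` is the maximum size of a `t`-independent subset of `G`
(it is `0` if `G` has no nonempty `t`-independent subset, since `∅` is
`t`-independent). -/
noncomputable def sIndep (G : Type*) [AddCommGroup G] (t : ℕ) : ℕ :=
  sSup {m | ∃ A : Finset G, IsTIndep t A ∧ A.card = m}

/-!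
Splitting a relation by the signs of its coefficients, `A` is 3-independent exactly when `A + A`
misses `0`, `A` and `-A`. For such `A` and `a ∈ A` the sets `A`, `-A`, `a + A` and `a - A` are
pairwise disjoint, so `4 |A| ≤ n`. Conversely, a finite abelian group that is neither of exponent
2 nor of exponent 3 surjects onto some `ZMod k` with `k ≥ 4`: by the structure theorem either a
cyclic factor has order at least 4, or factors of orders 3 and 2 combine to `ZMod 6`. In `ZMod k`
the residues between about `k / 6` and `k / 3` form such a set of density at least `1 / 9`, and
its preimage under the surjection keeps both properties.
-/

open Finset Pointwise

section
variable {G : Type*} [AddCommGroup G]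

theorem isTIndep_empty (t : ℕ) : IsTIndep t (∅ : Finset G) :=
  fun _ hc _ _ x => hc x (notMem_empty x)

theorem IsTIndep.eq_of_multiset_sum_eq {t : ℕ} {A : Finset G} (hA : IsTIndep t A)
    {P N : Multiset G} (hP : ∀ x ∈ P, x ∈ A) (hN : ∀ x ∈ N, x ∈ A)
    (hcard : Multiset.card P + Multiset.card N ≤ t) (hsum : P.sum = N.sum) : P = N := by
  classical
  have hzero := hA (fun x => (P.count x : ℤ) - N.count x)
    (fun x hx => by
      simp [Multiset.count_eq_zero.mpr (mt (hP x) hx), Multiset.count_eq_zero.mpr (mt (hN x) hx)])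
    (calc ∑ x ∈ A, |(P.count x : ℤ) - N.count x|
        ≤ ∑ x ∈ A, ((P.count x : ℤ) + N.count x) :=
          sum_le_sum fun x _ => (abs_sub _ _).trans (by simp)
      _ ≤ t := by
          push_cast [sum_add_distrib, ← Nat.cast_sum, Multiset.sum_count_eq_card hP,
            Multiset.sum_count_eq_card hN]
          exact_mod_cast hcard)
    (by
      simp only [sub_smul, sum_sub_distrib, natCast_zsmul]
      rw [← sum_multiset_count_of_subset P A fun x hx => hP x (Multiset.mem_toFinset.mp hx),
        ← sum_multiset_count_of_subset N A fun x hx => hN x (Multiset.mem_toFinset.mp hx),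
        hsum, sub_self])
  exact Multiset.ext.mpr fun x => by have := hzero x; omega

theorem isTIndep_of_multiset_sum_eq {t : ℕ} {A : Finset G}
    (hA : ∀ P N : Multiset G, (∀ x ∈ P, x ∈ A) → (∀ x ∈ N, x ∈ A) →
      Multiset.card P + Multiset.card N ≤ t → P.sum = N.sum → P = N) :
    IsTIndep t A := by
  classical
  intro c hc habs hsum
  let ms (f : G → ℕ) : Multiset G := ∑ x ∈ A, f x • {x}
  have count_ms (f : G → ℕ) (y : G) : (ms f).count y = if y ∈ A then f y else 0 := by
    simp [ms, Multiset.count_sum', Multiset.count_singleton]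
  have card_ms (f : G → ℕ) : Multiset.card (ms f) = ∑ x ∈ A, f x := by simp [ms]
  have sum_ms (f : G → ℕ) : (ms f).sum = ∑ x ∈ A, f x • x := by
    rw [← Multiset.coe_sumAddMonoidHom, map_sum]; simp [Multiset.sum_nsmul]
  have mem_ms (f : G → ℕ) : ∀ y ∈ ms f, y ∈ A := by simp +contextual [ms]
  have hPN := hA (ms fun x => (c x).toNat) (ms fun x => (-c x).toNat) (mem_ms _) (mem_ms _)
    (by
      rw [card_ms, card_ms, ← sum_add_distrib]
      simp only [Int.toNat_add_toNat_neg_eq_natAbs]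
      zify
      simpa using habs)
    (by
      rw [← sub_eq_zero, sum_ms, sum_ms, ← sum_sub_distrib, ← hsum]
      refine sum_congr rfl fun x _ => ?_
      rw [← natCast_zsmul, ← natCast_zsmul, ← sub_smul, Int.toNat_sub_toNat_neg])
  intro x
  by_cases hx : x ∈ A
  · have := congrArg (Multiset.count x) hPN
    simp only [count_ms, if_pos hx] at this
    omega
  · exact hc x hx

theorem isTIndep_iff_multiset {t : ℕ} {A : Finset G} :
    IsTIndep t A ↔ ∀ P N : Multiset G, (∀ x ∈ P, x ∈ A) → (∀ x ∈ N, x ∈ A) →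
      Multiset.card P + Multiset.card N ≤ t → P.sum = N.sum → P = N :=
  ⟨fun hA _ _ => hA.eq_of_multiset_sum_eq, isTIndep_of_multiset_sum_eq⟩

def IsSymmSumFree (A : Finset G) : Prop :=
  ∀ x ∈ A, ∀ y ∈ A, ∀ z ∈ A, x + y ≠ 0 ∧ x + y ≠ z ∧ x + y ≠ -z

theorem isTIndep_three_iff {A : Finset G} : IsTIndep 3 A ↔ IsSymmSumFree A := by
  rw [isTIndep_iff_multiset]
  constructor
  · intro hA x hx y hy z hz
    refine ⟨fun h => ?_, fun h => ?_, fun h => ?_⟩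
    · simpa using congrArg Multiset.card
        (hA {x, y} 0 (by simp [hx, hy]) (by simp) (by simp) (by simp [h]))
    · simpa using congrArg Multiset.card
        (hA {x, y} {z} (by simp [hx, hy]) (by simp [hz]) (by simp) (by simp [h]))
    · simpa using congrArg Multiset.card
        (hA {x, y, z} 0 (by simp [hx, hy, hz]) (by simp) (by simp) (by simp [← add_assoc, h]))
  · intro hA P N hP hN hcard hsum
    wlog hle : Multiset.card N ≤ Multiset.card P generalizing P N
    · exact (this N P hN hP (by omega) hsum.symm (by omega)).symm
    obtain hN0 | hN1 : Multiset.card N = 0 ∨ Multiset.card N = 1 := by omega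
    · obtain rfl := Multiset.card_eq_zero.mp hN0
      obtain hP0 | hP1 | hP2 | hP3 : Multiset.card P = 0 ∨ Multiset.card P = 1 ∨
          Multiset.card P = 2 ∨ Multiset.card P = 3 := by omega
      · exact Multiset.card_eq_zero.mp hP0
      · obtain ⟨x, rfl⟩ := Multiset.card_eq_one.mp hP1
        have hx := hP x (by simp)
        have hx0 : x = 0 := by simpa using hsum
        exact absurd (by rw [hx0, add_zero]) (hA x hx x hx x hx).1
      · obtain ⟨x, y, rfl⟩ := Multiset.card_eq_two.mp hP2
        have hx := hP x (by simp)
        exact absurd (by simpa using hsum) (hA x hx y (hP y (by simp)) x hx).1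
      · obtain ⟨x, y, z, rfl⟩ := Multiset.card_eq_three.mp hP3
        refine absurd (eq_neg_of_add_eq_zero_left ?_) (hA x (hP x (by simp)) y (hP y (by simp))
          z (hP z (by simp))).2.2
        simpa [add_assoc] using hsum
    · obtain ⟨z, rfl⟩ := Multiset.card_eq_one.mp hN1
      obtain hP1 | hP2 : Multiset.card P = 1 ∨ Multiset.card P = 2 := by omega
      · obtain ⟨x, rfl⟩ := Multiset.card_eq_one.mp hP1
        simpa using hsum
      · obtain ⟨x, y, rfl⟩ := Multiset.card_eq_two.mp hP2
        exact absurd (by simpa using hsum)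
          (hA x (hP x (by simp)) y (hP y (by simp)) z (hN z (by simp))).2.1

theorem IsSymmSumFree.four_mul_card_le [Fintype G] {A : Finset G} (hA : IsSymmSumFree A) :
    4 * #A ≤ Fintype.card G := by
  classical
  obtain rfl | ⟨a, ha⟩ := A.eq_empty_or_nonempty
  · simp
  have hneg : Disjoint A (-A) := by
    rw [disjoint_left]
    intro x hx hx'
    exact (hA x hx (-x) (mem_neg'.mp hx') x hx).1 (add_neg_cancel x)
  have hshift : Disjoint (A ∪ -A) (a +ᵥ (A ∪ -A)) := by
    rw [disjoint_left]
    intro x hx hx'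
    obtain ⟨y, hy, rfl⟩ := mem_vadd_finset.mp hx'
    simp only [mem_union, mem_neg', vadd_eq_add] at hx hy
    rcases hx with hx | hx <;> rcases hy with hy | hy
    · exact (hA a ha y hy _ hx).2.1 rfl
    · exact (hA _ hx (-y) hy a ha).2.1 (by abel)
    · exact (hA a ha y hy _ hx).2.2 (by simp)
    · exact (hA a ha _ hx (-y) hy).2.1 (by abel)
  calc 4 * #A = #(A ∪ -A ∪ (a +ᵥ (A ∪ -A))) := by
        rw [card_union_of_disjoint hshift, card_vadd_finset, card_union_of_disjoint hneg, card_neg]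
        ring
    _ ≤ Fintype.card G := card_le_univ _

theorem IsSymmSumFree.preimage [Fintype G] {H : Type*} [AddCommGroup H] [DecidableEq H]
    (φ : G →+ H) {S : Finset H} (hS : IsSymmSumFree S) : IsSymmSumFree {x | φ x ∈ S} := by
  intro x hx y hy z hz
  simp only [mem_filter, mem_univ, true_and] at hx hy hz
  obtain ⟨h0, hz', hneg⟩ := hS _ hx _ hy _ hz
  exact ⟨fun h => h0 (by rw [← map_add, h, map_zero]), fun h => hz' (by rw [← map_add, h]),
    fun h => hneg (by rw [← map_add, h, map_neg])⟩

theorem AddMonoidHom.card_filter_mem_mul_card [Fintype G] {H : Type*} [AddCommGroup H]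
    [Fintype H] [DecidableEq H] (φ : G →+ H) (hφ : Function.Surjective φ) (S : Finset H) :
    #{x | φ x ∈ S} * Fintype.card H = #S * Fintype.card G := by
  have hfibres (T : Finset H) : #{x | φ x ∈ T} = #T * #{x | φ x = 0} := by
    rw [← sum_card_fiberwise_eq_card_filter, sum_const_nat fun y _ =>
      AddMonoidHom.card_fiber_eq_of_mem_range φ (hφ y) ⟨0, map_zero φ⟩]
  have huniv := hfibres univ
  simp only [mem_univ, filter_true, card_univ] at huniv
  rw [hfibres, huniv, mul_comm (Fintype.card H), mul_assoc]

end

theorem ZMod.natCast_inj_of_lt {k m n : ℕ} (hm : m < k) (hn : n < k) (h : (m : ZMod k) = n) :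
    m = n := by
  simpa [ZMod.val_cast_of_lt hm, ZMod.val_cast_of_lt hn] using congrArg ZMod.val h

/-- With `h = ⌊(k - 1) / 3⌋`, pairwise sums of the residues `⌊h / 2⌋ + 1, …, h` lie in
`(h, k - h)`, which misses `0`, the set itself and its negative. -/
theorem ZMod.exists_isSymmSumFree {k : ℕ} (hk : 4 ≤ k) :
    ∃ S : Finset (ZMod k), IsSymmSumFree S ∧ k ≤ 9 * #S := by
  set h := (k - 1) / 3
  have hcast : Set.InjOn (Nat.cast : ℕ → ZMod k) (Icc (h / 2 + 1) h) := fun m hm n hn hmn =>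
    ZMod.natCast_inj_of_lt (by simp at hm; omega) (by simp at hn; omega) hmn
  refine ⟨(Icc (h / 2 + 1) h).image Nat.cast, ?_, ?_⟩
  · simp only [IsSymmSumFree, mem_image, mem_Icc, forall_exists_index, and_imp]
    rintro _ x hx₁ hx₂ rfl _ y hy₁ hy₂ rfl _ z hz₁ hz₂ rfl
    refine ⟨fun he => ?_, fun he => ?_, fun he => ?_⟩
    · have := ZMod.natCast_inj_of_lt (k := k) (m := x + y) (n := 0) (by omega) (by omega)
        (by simpa using he)
      omega
    · have := ZMod.natCast_inj_of_lt (k := k) (m := x + y) (n := z) (by omega) (by omega)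
        (by simpa using he)
      omega
    · have := ZMod.natCast_inj_of_lt (k := k) (m := x + y + z) (n := 0) (by omega) (by omega)
        (by push_cast; rw [he, neg_add_cancel])
      omega
  · rw [card_image_of_injOn hcast, Nat.card_Icc]
    omega

theorem exists_surjective_zmod {G : Type*} [AddCommGroup G] [Finite G]
    (h2 : ¬ ∀ x : G, 2 • x = 0) (h3 : ¬ ∀ x : G, 3 • x = 0) :
    ∃ k, 4 ≤ k ∧ ∃ φ : G →+ ZMod k, Function.Surjective φ := by
  classical
  obtain ⟨ι, _, n, hn, ⟨e⟩⟩ := AddCommGroup.equiv_directSum_zmod_of_finite' G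
  let e' : G ≃+ Π i, ZMod (n i) :=
    e.trans (DirectSum.linearEquivFunOnFintype ℤ ι _).toAddEquiv
  let π (i : ι) : G →+ ZMod (n i) := (Pi.evalAddMonoidHom _ i).comp e'.toAddMonoidHom
  have hπ (i : ι) : Function.Surjective (π i) :=
    (Function.surjective_eval i).comp e'.surjective
  have nsmul_eq_zero (m : ℕ) (hm : ∀ i, n i ∣ m) (x : G) : m • x = 0 := by
    refine e'.injective (funext fun i => ?_)
    simp [nsmul_eq_mul, (ZMod.natCast_eq_zero_iff _ _).mpr (hm i)]
  by_cases hbig : ∃ i, 4 ≤ n i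
  · obtain ⟨i, hi⟩ := hbig
    exact ⟨n i, hi, π i, hπ i⟩
  push Not at hbig
  obtain ⟨i, hi⟩ : ∃ i, n i = 3 := by
    by_contra! h
    exact h2 (nsmul_eq_zero 2 fun j => by
      rw [show n j = 2 by have := hn j; have := hbig j; have := h j; omega])
  obtain ⟨j, hj⟩ : ∃ j, n j = 2 := by
    by_contra! h
    exact h3 (nsmul_eq_zero 3 fun j => by
      rw [show n j = 3 by have := hn j; have := hbig j; have := h j; omega])
  have hij : i ≠ j := by rintro rfl; omega
  have hcop : (n i).Coprime (n j) := by rw [hi, hj]; norm_num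
  refine ⟨n i * n j, by rw [hi, hj]; norm_num,
    (ZMod.chineseRemainder hcop).symm.toAddEquiv.toAddMonoidHom.comp ((π i).prod (π j)),
    (ZMod.chineseRemainder hcop).symm.surjective.comp ?_⟩
  intro ⟨a, b⟩
  refine ⟨e'.symm (Pi.single i a + Pi.single j b), ?_⟩
  simp [π, hij, hij.symm]

theorem exists_isSymmSumFree {G : Type*} [AddCommGroup G] [Fintype G]
    (h2 : ¬ ∀ x : G, 2 • x = 0) (h3 : ¬ ∀ x : G, 3 • x = 0) :
    ∃ A : Finset G, IsSymmSumFree A ∧ Fintype.card G ≤ 9 * #A := by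
  classical
  obtain ⟨k, hk, φ, hφ⟩ := exists_surjective_zmod h2 h3
  have : NeZero k := ⟨by omega⟩
  obtain ⟨S, hS, hSk⟩ := ZMod.exists_isSymmSumFree hk
  have hcard := φ.card_filter_mem_mul_card hφ S
  rw [ZMod.card] at hcard
  refine ⟨({x | φ x ∈ S} : Finset G), hS.preimage φ,
    Nat.le_of_mul_le_mul_right ?_ (by omega : 0 < k)⟩
  calc Fintype.card G * k ≤ Fintype.card G * (9 * #S) := Nat.mul_le_mul_left _ hSk
    _ = 9 * #{x | φ x ∈ S} * k := by rw [mul_assoc, hcard]; ring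

section
variable (G : Type*) [AddCommGroup G] [Fintype G]

theorem bddAbove_card_isTIndep (t : ℕ) :
    BddAbove {m | ∃ A : Finset G, IsTIndep t A ∧ #A = m} :=
  ⟨Fintype.card G, by rintro _ ⟨A, -, rfl⟩; exact card_le_univ A⟩

theorem exists_isTIndep_card_eq_sIndep (t : ℕ) :
    ∃ A : Finset G, IsTIndep t A ∧ #A = sIndep G t :=
  Nat.sSup_mem (s := {m | ∃ A : Finset G, IsTIndep t A ∧ #A = m})
    ⟨0, ∅, isTIndep_empty t, rfl⟩ (bddAbove_card_isTIndep G t)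

variable {G}

theorem IsTIndep.card_le_sIndep {t : ℕ} {A : Finset G} (hA : IsTIndep t A) : #A ≤ sIndep G t :=
  le_csSup (bddAbove_card_isTIndep G t) ⟨A, hA, rfl⟩

end

theorem stmt6_general {G : Type*} [AddCommGroup G] [Fintype G] :
    (((∀ x : G, 2 • x = 0) ∨ (∀ x : G, 3 • x = 0)) → sIndep G 3 = 0) ∧
    (¬ ((∀ x : G, 2 • x = 0) ∨ (∀ x : G, 3 • x = 0)) →
      (Fintype.card G : ℚ) / 9 ≤ (sIndep G 3 : ℚ) ∧
      (sIndep G 3 : ℚ) ≤ (Fintype.card G : ℚ) / 4) := by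
  classical
  obtain ⟨B, hB, hBcard⟩ := exists_isTIndep_card_eq_sIndep G 3
  rw [isTIndep_three_iff] at hB
  refine ⟨fun h => ?_, fun h => ?_⟩
  · rw [← hBcard, card_eq_zero, eq_empty_iff_forall_notMem]
    intro a ha
    obtain ⟨h0, -, hneg⟩ := hB a ha a ha a ha
    rcases h with h | h
    · exact h0 (by simpa [two_nsmul] using h a)
    · exact hneg (eq_neg_of_add_eq_zero_left (by simpa [succ_nsmul, two_nsmul] using h a))
  · obtain ⟨A, hA, hAcard⟩ := exists_isSymmSumFree (not_or.mp h).1 (not_or.mp h).2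
    have hlow : #A ≤ sIndep G 3 := (isTIndep_three_iff.mpr hA).card_le_sIndep
    have hup : 4 * sIndep G 3 ≤ Fintype.card G := hBcard ▸ hB.four_mul_card_le
    constructor
    · rw [div_le_iff₀ (by norm_num)]
      exact_mod_cast (by omega : Fintype.card G ≤ sIndep G 3 * 9)
    · rw [le_div_iff₀ (by norm_num)]
      exact_mod_cast (by omega : sIndep G 3 * 4 ≤ Fintype.card G)

theorem stmt6 {G : Type*} [AddCommGroup G] [Fintype G]
    (hn : 2 ≤ Fintype.card G) :
    (((∀ x : G, 2 • x = 0) ∨ (∀ x : G, 3 • x = 0)) → sIndep G 3 = 0) ∧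
    (¬ ((∀ x : G, 2 • x = 0) ∨ (∀ x : G, 3 • x = 0)) →
      (Fintype.card G : ℚ) / 9 ≤ (sIndep G 3 : ℚ) ∧
      (sIndep G 3 : ℚ) ≤ (Fintype.card G : ℚ) / 4) :=
  stmt6_general
end

section
/- Let G be a finite abelian group of order n whose exponent κ is congruent to 2 modulo 4. Then G contains a 3-independent set of size (n - |Ord(G,2)|)/4, where Ord(G,2) = {x ∈ G : 2x = 0}. -/
/-! Write the exponent as `2u` with `u` odd, so that `G ≅ G[2] × G[u]`. Choose a nonzero
homomorphism `f : G[2] → ZMod 2` and a set `R ⊆ G[u]` containing exactly one of `k, -k` for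
every `k ≠ 0` (possible because `G[u]` has no element of order `2`), and let
`A = {(h, k) | f h = 1, k ∈ R}`, of size `|G[2]| / 2 · (|G[u]| - 1) / 2`. As `f` is `1` on `A`,
a relation among elements of `A` has even weight, so one of weight at most `3` is, up to sign,
`a + b = 0` or `a - b = 0` with `a, b ∈ A`. The second one is trivial, and the first one is ruled
out by the choice of `R`. -/

open Finset

section Independence

variable {G : Type*} [AddCommGroup G] {A : Finset G}

theorem add_self_eq_zero_of_zsmul_eq_zero {a : G} {z : ℤ} (hz : z ≠ 0) (hz2 : |z| ≤ 2)
    (h : z • a = 0) : a + a = 0 := by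
  obtain ⟨k, hk⟩ : z ∣ 2 := by
    have : z = 1 ∨ z = -1 ∨ z = 2 ∨ z = -2 := by
      have := abs_pos.mpr hz
      rw [abs_le] at hz2
      omega
    rcases this with rfl | rfl | rfl | rfl <;> norm_num
  rw [← two_zsmul, hk, mul_comm, mul_zsmul, h, zsmul_zero]

theorem add_eq_zero_or_eq_of_zsmul_add_zsmul_eq_zero {a b : G} {z w : ℤ} (hz : |z| = 1)
    (hw : |w| = 1) (h : z • a + w • b = 0) : a + b = 0 ∨ a = b := by
  rcases (abs_eq zero_le_one).mp hz with rfl | rfl <;>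
  rcases (abs_eq zero_le_one).mp hw with rfl | rfl <;>
  simp only [one_smul, neg_smul] at h
  · exact .inl h
  · exact .inr (sub_eq_zero.mp (by rwa [← sub_eq_add_neg] at h))
  · exact .inr (sub_eq_zero.mp (by rwa [neg_add_eq_sub] at h)).symm
  · exact .inl (neg_eq_zero.mp (by rwa [neg_add]))

theorem isTIndep_two_of_add_ne_zero (hA : ∀ a ∈ A, ∀ b ∈ A, a + b ≠ 0) :
    IsTIndep 2 A := by
  classical
  intro c hc hweight hrel
  by_contra! ⟨a, hca⟩
  have ha : a ∈ A := by by_contra h; exact hca (hc a h)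
  have habs : ∀ y, 0 ≤ |c y| := fun y => abs_nonneg _
  have hca_pos := abs_pos.mpr hca
  by_cases hb : ∃ b ∈ A, b ≠ a ∧ c b ≠ 0
  · obtain ⟨b, hb, hba, hcb⟩ := hb
    have hcb_pos := abs_pos.mpr hcb
    have hpair := add_le_sum (fun y _ => habs y) ha hb hba.symm
    have hrest : ∀ y ∈ A, y ≠ a ∧ y ≠ b → c y • y = 0 := by
      rintro y hy ⟨hya, hyb⟩
      have htriple := sum_le_sum_of_subset_of_nonneg (s := {a, b, y}) (t := A)
        (by grind) fun y _ _ => habs y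
      rw [show c y = 0 by grind, zero_smul]
    rw [sum_eq_add_of_mem a b ha hb hba.symm hrest] at hrel
    rcases add_eq_zero_or_eq_of_zsmul_add_zsmul_eq_zero (by omega) (by omega) hrel with h | h
    exacts [hA a ha b hb h, hba h.symm]
  · push Not at hb
    rw [sum_eq_single_of_mem a ha fun y hy hya => by rw [hb y hy hya, zero_smul]] at hrel
    have hsingle := single_le_sum (fun y _ => habs y) ha
    exact hA a ha a ha (add_self_eq_zero_of_zsmul_eq_zero hca (by omega) hrel)

theorem IsTIndep.two_mul_add_one {k : ℕ} (ψ : G →+ ZMod 2) (hψ : ∀ a ∈ A, ψ a = 1)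
    (hA : IsTIndep (2 * k) A) : IsTIndep (2 * k + 1) A := by
  intro c hc hweight hrel
  refine hA c hc ?_ hrel
  have heven : ((2 : ℕ) : ℤ) ∣ ∑ x ∈ A, |c x| := by
    rw [← ZMod.intCast_zmod_eq_zero_iff_dvd]
    calc ((∑ x ∈ A, |c x| : ℤ) : ZMod 2) = ∑ x ∈ A, ψ (c x • x) := by
          push_cast
          refine sum_congr rfl fun x hx => ?_
          rw [ZMod.intCast_abs_mod_two, map_zsmul, hψ x hx, zsmul_one]
      _ = 0 := by rw [← map_sum, hrel, map_zero]
  push_cast at hweight heven ⊢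
  omega

theorem isTIndep_three_of_parity_of_neg_notMem {K : Type*} [AddGroup K] (ψ : G →+ ZMod 2)
    (τ : G →+ K) {R : Set K} (hR : ∀ r ∈ R, -r ∉ R)
    (hA : ∀ a ∈ A, ψ a = 1 ∧ τ a ∈ R) : IsTIndep 3 A := by
  refine (isTIndep_two_of_add_ne_zero fun a ha b hb hab => ?_).two_mul_add_one (k := 1) ψ
    fun a ha => (hA a ha).1
  apply hR _ (hA a ha).2
  rw [← map_neg, neg_eq_of_add_eq_zero_right hab]
  exact (hA b hb).2

end Independence

theorem two_mul_card_filter_eq_one {H : Type*} [AddGroup H] [Fintype H] (f : H →+ ZMod 2)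
    {x : H} (hx : f x = 1) : 2 * #{h | f h = 1} = Fintype.card H := by
  have hfib : #{h | f h = 1} = #{h | f h = 0} :=
    AddMonoidHom.card_fiber_eq_of_mem_range f ⟨x, hx⟩ ⟨0, map_zero f⟩
  have hne : ∀ z : ZMod 2, ¬z = 1 ↔ z = 0 := by decide
  rw [← card_univ, ← card_filter_add_card_filter_not (s := univ) (fun h => f h = 1)]
  simp only [hne]
  omega

theorem exists_finset_neg_notMem_two_mul_card_add_one {K : Type*} [AddGroup K] [Fintype K]
    (hK : ∀ k : K, k + k = 0 → k = 0) :
    ∃ R : Finset K, (∀ r ∈ R, -r ∉ R) ∧ 2 * #R + 1 = Fintype.card K := by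
  classical
  let _ : LinearOrder K := LinearOrder.lift' _ (Fintype.equivFin K).injective
  refine ⟨univ.filter fun k => k < -k, fun r hr hr' => ?_, ?_⟩
  · simp only [mem_filter, mem_univ, true_and, neg_neg] at hr hr'
    exact lt_asymm hr hr'
  have hneg : #{k : K | -k < k} = #{k : K | k < -k} :=
    card_nbij' Neg.neg Neg.neg (fun k hk => by simp_all) (fun k hk => by simp_all)
      (fun k _ => neg_neg k) (fun k _ => neg_neg k)
  have hzero : ∀ k : K, ¬k < -k ↔ k = 0 ∨ -k < k := fun k => by
    rw [not_lt, le_iff_eq_or_lt, eq_comm, eq_neg_iff_add_eq_zero]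
    exact or_congr_left ⟨hK k, fun h => by simp [h]⟩
  rw [← card_univ, ← card_filter_add_card_filter_not (s := univ) (fun k : K => k < -k)]
  simp only [hzero, filter_or, filter_eq', mem_univ, if_true]
  rw [card_union_of_disjoint (disjoint_singleton_left.mpr (by simp)), card_singleton, hneg]
  ring

theorem Submodule.isCompl_torsionBy_of_coprime {G : Type*} [AddCommGroup G] {m n : ℕ}
    (hmn : m.Coprime n) (hG : ∀ g : G, (m * n) • g = 0) :
    IsCompl (torsionBy ℤ G m) (torsionBy ℤ G n) := by
  obtain ⟨a, b, hab⟩ := Nat.isCoprime_iff_coprime.mpr hmn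
  have hG' : ∀ g : G, ((m : ℤ) * n) • g = 0 := fun g => by exact_mod_cast hG g
  constructor
  · rw [disjoint_def]
    intro g hgm hgn
    rw [mem_torsionBy_iff] at hgm hgn
    rw [← one_zsmul g, ← hab, add_zsmul, mul_zsmul, mul_zsmul, hgm, hgn, smul_zero, smul_zero,
      add_zero]
  · rw [codisjoint_iff_exists_add_eq]
    intro g
    refine ⟨(b * n) • g, (a * m) • g, ?_, ?_, ?_⟩
    · rw [mem_torsionBy_iff, ← mul_zsmul, show (m : ℤ) * (b * n) = b * (m * n) by ring,
        mul_zsmul, hG', smul_zero]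
    · rw [mem_torsionBy_iff, ← mul_zsmul, show (n : ℤ) * (a * m) = a * (m * n) by ring,
        mul_zsmul, hG', smul_zero]
    · rw [← add_zsmul, add_comm, hab, one_zsmul]

theorem exists_addMonoidHom_zmod_two_apply_eq_one {M : Type*} [AddCommGroup M]
    (hM : ∀ m : M, 2 • m = 0) {x : M} (hx : x ≠ 0) : ∃ f : M →+ ZMod 2, f x = 1 := by
  let _ := AddCommGroup.zmodModule hM
  obtain ⟨f, hf⟩ := Module.Projective.exists_dual_ne_zero (ZMod 2) hx
  have hone : ∀ z : ZMod 2, z ≠ 0 → z = 1 := by decide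
  exact ⟨f.toAddMonoidHom, hone _ hf⟩

theorem exists_ne_zero_two_nsmul_eq_zero {G : Type*} [AddGroup G] [Finite G]
    (h : 2 ∣ AddMonoid.exponent G) : ∃ g : G, g ≠ 0 ∧ 2 • g = 0 := by
  obtain ⟨g, hg⟩ := exists_prime_addOrderOf_dvd_card' (G := G) 2 <|
    h.trans AddGroup.exponent_dvd_nat_card
  exact ⟨g, fun h0 => by simp [h0] at hg, hg ▸ addOrderOf_nsmul_eq_zero g⟩

theorem exists_isTIndep_three_of_addEquiv_prod {G H K : Type*} [AddCommGroup G] [AddCommGroup H]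
    [AddCommGroup K] [Fintype H] [Fintype K] (e : G ≃+ H × K) (hH : ∀ h : H, 2 • h = 0)
    {x : H} (hx : x ≠ 0) (hK : ∀ k : K, k + k = 0 → k = 0) :
    ∃ A : Finset G, IsTIndep 3 A ∧
      4 * #A + Fintype.card H = Fintype.card H * Fintype.card K := by
  classical
  obtain ⟨f, hf⟩ := exists_addMonoidHom_zmod_two_apply_eq_one hH hx
  obtain ⟨R, hR, hRcard⟩ := exists_finset_neg_notMem_two_mul_card_add_one hK
  refine ⟨(({h | f h = 1} : Finset H) ×ˢ R).map e.symm.toEquiv.toEmbedding, ?_, ?_⟩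
  · refine isTIndep_three_of_parity_of_neg_notMem
      (f.comp ((AddMonoidHom.fst H K).comp e.toAddMonoidHom))
      ((AddMonoidHom.snd H K).comp e.toAddMonoidHom) (R := (R : Set K)) hR fun a ha => ?_
    simp only [mem_map_equiv, mem_product, mem_filter, mem_univ, true_and] at ha
    simpa using ha
  · rw [card_map, card_product, ← two_mul_card_filter_eq_one f hf, ← hRcard]
    ring

theorem stmt11 {G : Type*} [AddCommGroup G] [Fintype G]
    (hκ : AddMonoid.exponent G % 4 = 2) :
    ∃ A : Finset G, IsTIndep 3 A ∧
      4 * A.card = Fintype.card G - Nat.card {x : G // 2 • x = 0} := by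
  classical
  obtain ⟨u, hκu, hu⟩ : ∃ u, AddMonoid.exponent G = 2 * u ∧ Odd u :=
    ⟨AddMonoid.exponent G / 2, by omega, Nat.odd_iff.mpr (by omega)⟩
  have hcompl := Submodule.isCompl_torsionBy_of_coprime (G := G) (Nat.coprime_two_left.mpr hu)
    fun g => hκu ▸ AddMonoid.exponent_nsmul_eq_zero g
  set H := Submodule.torsionBy ℤ G (2 : ℕ)
  set K := Submodule.torsionBy ℤ G u
  have hmemH : ∀ g : G, g ∈ H ↔ 2 • g = 0 := fun g => by
    rw [Submodule.mem_torsionBy_iff, natCast_zsmul]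
  have hK : ∀ k : K, k + k = 0 → k = 0 := fun k hk =>
    Subtype.ext <| Submodule.disjoint_def.mp hcompl.disjoint k
      ((hmemH k).mpr (by rw [two_nsmul]; exact congrArg Subtype.val hk)) k.2
  obtain ⟨g, hg0, hg2⟩ := exists_ne_zero_two_nsmul_eq_zero (G := G) (hκu ▸ dvd_mul_right 2 u)
  obtain ⟨A, hA, hcard⟩ := exists_isTIndep_three_of_addEquiv_prod
    (Submodule.prodEquivOfIsCompl H K hcompl).symm.toAddEquiv
    (fun h => Subtype.ext ((hmemH h).mp h.2)) (x := ⟨g, (hmemH g).mpr hg2⟩)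
    (by simpa [Subtype.ext_iff] using hg0) hK
  refine ⟨A, hA, ?_⟩
  have hcardH : Nat.card {x : G // 2 • x = 0} = Fintype.card H := by
    rw [Nat.card_eq_fintype_card]
    exact Fintype.card_congr (Equiv.subtypeEquivRight fun g => (hmemH g).symm)
  have hcardG : Fintype.card G = Fintype.card H * Fintype.card K := by
    rw [← Fintype.card_prod]
    exact Fintype.card_congr (Submodule.prodEquivOfIsCompl H K hcompl).symm.toEquiv
  omega
end

section
/- Let G be a finite abelian group of order n ≥ 2 whose exponent κ is odd and has at least one prime divisor congruent to 5 modulo 6, and let p be the smallest such prime divisor. Then the maximum size of a 3-independent subset of G equals (1 + 1/p)·n/6 = (p+1)·n/(6p). -/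
/-!
If `A` is 3-independent then `A ∪ -A` is a sum-free set of size `2|A|`, so the upper bound comes
from the Diananda–Yap bound `3|S| ≤ n + n/p` for sum-free sets `S` in a group of odd order `n`.
That bound is proved by induction on `n`, Kneser-style: Dyson e-transforms turn `(S, S)` into a
pair `(A, B)` with `B - B` inside the stabilizer `N` of `A`, and `A + b` is then a union of
`N`-cosets inside `S + S`; either this already gives the bound, or the image of `S` in `G ⧸ N` is
sum-free and the bound lifts from the quotient.
For the lower bound, write `p = 6m + 5`: the interval `{m + 1, …, 2m + 1}` is 3-independent in
`ZMod p`, since a short relation among these integers would hold in `ℤ`, and its preimage under a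
surjection `G → ZMod p` is 3-independent of size `(m + 1) n / p`.
-/

open Finset
open scoped Pointwise

-- Disjunctive, rather than phrased with the least such prime, so that it survives the
-- passage to quotients in the induction.
def DianandaYapBound (n s : ℕ) : Prop :=
  3 * s ≤ n ∨ ∃ q, q.Prime ∧ q ∣ n ∧ q % 3 = 2 ∧ 3 * s ≤ n + n / q

lemma Nat.exists_prime_dvd_mod_three_eq_two {n : ℕ} (hn : n % 3 = 2) :
    ∃ q, q.Prime ∧ q ∣ n ∧ q % 3 = 2 := by
  induction n using Nat.recOnMul with
  | zero => omega
  | one => omega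
  | prime q hq => exact ⟨q, hq, dvd_rfl, hn⟩
  | mul a b iha ihb =>
    have : a % 3 = 2 ∨ b % 3 = 2 := by
      rw [Nat.mul_mod] at hn
      have := Nat.mod_lt a three_pos
      have := Nat.mod_lt b three_pos
      interval_cases a % 3 <;> interval_cases b % 3 <;> simp_all
    rcases this with ha | hb
    · obtain ⟨q, hq, hqa, hq3⟩ := iha ha
      exact ⟨q, hq, hqa.mul_right b, hq3⟩
    · obtain ⟨q, hq, hqb, hq3⟩ := ihb hb
      exact ⟨q, hq, hqb.mul_left a, hq3⟩

lemma dianandaYapBound_of_le_succ {n s : ℕ} (h : 3 * s ≤ n + 1) : DianandaYapBound n s := by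
  by_cases hn : n % 3 = 2
  · obtain ⟨q, hq, hqn, hq3⟩ := Nat.exists_prime_dvd_mod_three_eq_two hn
    have : 1 ≤ n / q := (Nat.one_le_div_iff hq.pos).2 (Nat.le_of_dvd (by omega) hqn)
    exact Or.inr ⟨q, hq, hqn, hq3, by omega⟩
  · exact Or.inl (by omega)

lemma DianandaYapBound.mul {k t s ν : ℕ} (h : DianandaYapBound k t) (hs : s ≤ t * ν) :
    DianandaYapBound (k * ν) s := by
  have hs3 : 3 * s ≤ 3 * t * ν := by rw [mul_assoc]; omega
  rcases h with h | ⟨q, hq, hqk, hq3, h⟩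
  · exact Or.inl (hs3.trans (Nat.mul_le_mul_right ν h))
  · refine Or.inr ⟨q, hq, hqk.mul_right ν, hq3, ?_⟩
    calc 3 * s ≤ (k + k / q) * ν := hs3.trans (Nat.mul_le_mul_right ν h)
      _ = k * ν + k * ν / q := by rw [add_mul, Nat.div_mul_right_comm hqk]

lemma DianandaYapBound.le_add_div {n s p : ℕ} (h : DianandaYapBound n s) (hp : 0 < p)
    (hmin : ∀ q, q.Prime → q ∣ n → q % 3 = 2 → p ≤ q) : 3 * s ≤ n + n / p := by
  rcases h with h | ⟨q, hq, hqn, hq3, h⟩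
  · exact h.trans (Nat.le_add_right n _)
  · exact h.trans (Nat.add_le_add_left (Nat.div_le_div_left (hmin q hq hqn hq3) hp) n)

section SumFree

variable {G : Type*} [AddCommGroup G] [DecidableEq G]

def IsSumFree (S : Finset G) : Prop := ∀ x ∈ S, ∀ y ∈ S, x + y ∉ S

lemma IsSumFree.disjoint_add {S : Finset G} (hS : IsSumFree S) : Disjoint (S + S) S := by
  rw [disjoint_left]
  intro z hz
  obtain ⟨x, hx, y, hy, rfl⟩ := mem_add.1 hz
  exact hS x hx y hy

lemma exists_addDysonETransform_stable (A B : Finset G) (hB : B.Nonempty) :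
    ∃ A' B' : Finset G, B' ⊆ B ∧ B'.Nonempty ∧ A' + B' ⊆ A + B ∧ #A' + #B' = #A + #B ∧
      ∀ b ∈ B', ∀ b' ∈ B', b - b' ∈ AddAction.stabilizer G A' := by
  induction B using Finset.strongInduction generalizing A with
  | H B ih =>
  by_cases hstab : ∀ b ∈ B, ∀ b' ∈ B, b - b' ∈ AddAction.stabilizer G A
  · exact ⟨A, B, subset_rfl, hB, subset_rfl, rfl, hstab⟩
  obtain ⟨b, hb, b', hb', a, ha, hba⟩ : ∃ b ∈ B, ∃ b' ∈ B, ∃ a ∈ A, b - b' + a ∉ A := by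
    simpa only [AddAction.mem_stabilizer_finset', vadd_eq_add, not_forall, exists_prop] using hstab
  -- the transform along `a - b'` keeps `b'` but drops `b`
  set x := addDysonETransform (a - b') (A, B)
  have hb'x : b' ∈ x.2 := by
    simp only [x, addDysonETransform_snd, mem_inter, mem_neg_vadd_finset_iff, vadd_eq_add]
    exact ⟨hb', by rwa [sub_add_cancel]⟩
  have hbx : b ∉ x.2 := by
    simp only [x, addDysonETransform_snd, mem_inter, mem_neg_vadd_finset_iff, vadd_eq_add]
    rintro ⟨-, h⟩
    exact hba (by convert h using 1; abel)
  obtain ⟨A', B', hB'x, hB', hA'B', hcard, hstab⟩ :=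
    ih x.2 ⟨inter_subset_left, fun h ↦ hbx (h hb)⟩ x.1 ⟨b', hb'x⟩
  refine ⟨A', B', hB'x.trans inter_subset_left, hB',
    hA'B'.trans (addDysonETransform.subset _ _), ?_, hstab⟩
  rw [hcard, addDysonETransform.card]

end SumFree

section Fibers

variable {G H : Type*} [AddCommGroup G] [Fintype G] [AddCommGroup H] [DecidableEq H]

lemma card_filter_mem_eq_mul (π : G →+ H) (hπ : Function.Surjective π) (T : Finset H) :
    #{g | π g ∈ T} = #T * #{g | π g = 0} := by
  rw [card_eq_sum_card_fiberwise (s := {g | π g ∈ T}) (t := T) fun g hg ↦ (mem_filter.1 hg).2]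
  refine sum_const_nat fun w hw ↦ ?_
  rw [filter_filter, ← AddMonoidHom.card_fiber_eq_of_mem_range π (hπ w) ⟨0, map_zero π⟩]
  congr 1
  exact filter_congr fun g _ ↦ ⟨And.right, fun h ↦ ⟨h ▸ hw, h⟩⟩

lemma card_filter_eq_le (π : G →+ H) (S : Finset G) (w : H) :
    #{s ∈ S | π s = w} ≤ #{g | π g = 0} := by
  rcases ({s ∈ S | π s = w} : Finset G).eq_empty_or_nonempty with h | ⟨s, hs⟩
  · simp [h]
  · rw [← AddMonoidHom.card_fiber_eq_of_mem_range π ⟨s, (mem_filter.1 hs).2⟩ ⟨0, map_zero π⟩]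
    exact card_le_card (filter_subset_filter _ (subset_univ S))

lemma card_add_le_card_image_mul (π : G →+ H) {S : Finset G} {w₁ w₂ : H}
    (hw₁ : w₁ ∈ S.image π) (hw₂ : w₂ ∈ S.image π) (hne : w₁ ≠ w₂)
    (hle : #{s ∈ S | π s = w₁} + #{s ∈ S | π s = w₂} ≤ #{g | π g = 0}) :
    #S + #{g | π g = 0} ≤ #(S.image π) * #{g | π g = 0} := by
  set ν := #{g | π g = 0}
  set T := S.image π
  have hw₂' : w₂ ∈ T.erase w₁ := mem_erase.2 ⟨hne.symm, hw₂⟩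
  have hrest : ∑ w ∈ (T.erase w₁).erase w₂, #{s ∈ S | π s = w} ≤ #((T.erase w₁).erase w₂) * ν :=
    sum_le_card_nsmul _ _ _ fun w _ ↦ card_filter_eq_le π S w
  have hT : #((T.erase w₁).erase w₂) + 2 = #T := by
    rw [← card_erase_add_one hw₁, ← card_erase_add_one hw₂']
  rw [card_eq_sum_card_fiberwise (f := π) (t := T) fun s hs ↦ mem_image_of_mem π hs,
    ← add_sum_erase _ _ hw₁, ← add_sum_erase _ _ hw₂', ← hT]
  nlinarith

end Fibers

section SumFreeQuotient

variable {G H : Type*} [AddCommGroup G] [Fintype G] [DecidableEq G] [AddCommGroup H] [DecidableEq H]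

lemma IsSumFree.card_filter_add_le {S : Finset G} (hS : IsSumFree S) (π : G →+ H) {x y : H}
    (hx : x ∈ S.image π) (hy : y ∈ S.image π) :
    #{s ∈ S | π s = y} + #{s ∈ S | π s = x + y} ≤ #{g | π g = 0} := by
  obtain ⟨a, ha, rfl⟩ := mem_image.1 hx
  obtain ⟨b, -, rfl⟩ := mem_image.1 hy
  set Sx := ({s ∈ S | π s = π a} : Finset G)
  set Sy := ({s ∈ S | π s = π b} : Finset G)
  set Sxy := ({s ∈ S | π s = π a + π b} : Finset G)
  have hdisj : Disjoint (Sx + Sy) Sxy :=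
    (hS.disjoint_add.mono_left (add_subset_add (filter_subset _ _) (filter_subset _ _))).mono_right
      (filter_subset _ _)
  have hfib : Sx + Sy ∪ Sxy ⊆ ({g | π g = π a + π b} : Finset G) := by
    refine union_subset (fun g hg ↦ ?_) (filter_subset_filter _ (subset_univ S))
    obtain ⟨u, hu, v, hv, rfl⟩ := mem_add.1 hg
    simp only [mem_filter, mem_univ, true_and, map_add, (mem_filter.1 hu).2, (mem_filter.1 hv).2]
  have := card_le_card hfib
  rw [card_union_of_disjoint hdisj, AddMonoidHom.card_fiber_eq_of_mem_range π
    ⟨a + b, map_add π a b⟩ ⟨0, map_zero π⟩] at this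
  have := card_le_card_add_left (s := Sx) (t := Sy) ⟨a, mem_filter.2 ⟨ha, rfl⟩⟩
  omega

lemma IsSumFree.image {S : Finset G} (hS : IsSumFree S) (π : G →+ H)
    (hcard : #(S.image π) * #{g | π g = 0} < #S + #{g | π g = 0}) :
    IsSumFree (S.image π) ∨ S.image π ⊆ {0} := by
  have key : ∀ x ∈ S.image π, ∀ y ∈ S.image π, x + y ∈ S.image π → y = x + y := by
    intro x hx y hy hxy
    by_contra hne
    exact (card_add_le_card_image_mul π hy hxy hne (hS.card_filter_add_le π hx hy)).not_gt hcard
  by_cases h0 : S.image π ⊆ {0}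
  · exact Or.inr h0
  refine Or.inl fun x hx y hy hxy ↦ h0 fun w hw ↦ ?_
  have hy0 : x = 0 := by simpa using key x hx y hy hxy
  subst hy0
  have h0T : (0 : H) ∈ S.image π := hx
  simpa [eq_comm] using key w hw 0 h0T (by simpa using hw)

lemma card_add_card_filter_mem_image_le (π : G →+ H) {C S : Finset G}
    (hC : ∀ g, π g = 0 → ∀ c ∈ C, g + c ∈ C) (hCS : Disjoint C S) :
    #C + #{g | π g ∈ S.image π} ≤ Fintype.card G := by
  have hdisj : Disjoint C ({g | π g ∈ S.image π} : Finset G) := by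
    rw [disjoint_left]
    intro c hc hcS
    obtain ⟨s, hs, hsc⟩ := mem_image.1 (mem_filter.1 hcS).2
    have : s - c + c ∈ C := hC _ (by rw [map_sub, hsc, sub_self]) c hc
    rw [sub_add_cancel] at this
    exact disjoint_left.1 hCS this hs
  rw [← card_union_of_disjoint hdisj]
  exact card_le_univ _

end SumFreeQuotient

theorem IsSumFree.dianandaYapBound {G : Type*} [AddCommGroup G] [Fintype G]
    (hodd : Odd (Fintype.card G)) {S : Finset G} (hS : IsSumFree S) :
    DianandaYapBound (Fintype.card G) #S := by
  induction hn : Fintype.card G using Nat.strong_induction_on generalizing G with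
  | _ n ih =>
  classical
  rcases S.eq_empty_or_nonempty with rfl | hSne
  · exact Or.inl (by simp)
  obtain ⟨A, B, hBS, ⟨b₀, hb₀⟩, hAB, hcard, hstab⟩ := exists_addDysonETransform_stable S S hSne
  set N := AddAction.stabilizer G A
  set π := QuotientAddGroup.mk' N
  have hπ : Function.Surjective π := QuotientAddGroup.mk'_surjective N
  set ν := #{g | π g = 0}
  set T := S.image π
  set k := Fintype.card (G ⧸ N)
  have hnk : n = k * ν := hn ▸ by simpa using card_filter_mem_eq_mul π hπ univ
  have hSν : #S ≤ #T * ν := (card_filter_mem_eq_mul π hπ T).symm ▸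
    card_le_card fun s hs ↦ mem_filter.2 ⟨mem_univ s, mem_image_of_mem π hs⟩
  have hBν : #B ≤ ν := by
    refine (card_le_card fun b hb ↦ mem_filter.2 ⟨mem_univ b, ?_⟩).trans
      (AddMonoidHom.card_fiber_eq_of_mem_range π ⟨b₀, rfl⟩ ⟨0, map_zero π⟩).le
    rw [QuotientAddGroup.mk'_apply, QuotientAddGroup.mk'_apply, QuotientAddGroup.eq,
      neg_add_eq_sub]
    exact hstab b₀ hb₀ b hb
  -- `A + b₀` is a union of cosets of `N` inside `S + S`, so it misses every coset meeting `S`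
  have hkey : #A + #T * ν ≤ n := by
    have hC : ∀ g, π g = 0 → ∀ c ∈ A.image (· + b₀), g + c ∈ A.image (· + b₀) := by
      intro g hg c hc
      obtain ⟨a, ha, rfl⟩ := mem_image.1 hc
      have hgN : g ∈ N := (QuotientAddGroup.eq_zero_iff g).1 hg
      exact mem_image.2 ⟨g + a, AddAction.mem_stabilizer_finset'.1 hgN ha, add_assoc g a b₀⟩
    have hCS : Disjoint (A.image (· + b₀)) S := by
      refine hS.disjoint_add.mono_left (subset_trans (fun c hc ↦ ?_) hAB)
      obtain ⟨a, ha, rfl⟩ := mem_image.1 hc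
      exact add_mem_add ha hb₀
    have := card_add_card_filter_mem_image_le π hC hCS
    rwa [card_image_of_injective _ (add_left_injective b₀), card_filter_mem_eq_mul π hπ, hn]
      at this
  have hSA : #S ≤ #A := by have := card_le_card hBS; omega
  have hν : 1 ≤ ν := card_pos.2 ⟨0, mem_filter.2 ⟨mem_univ 0, map_zero π⟩⟩
  rcases hν.eq_or_lt with hν1 | hν2
  · rw [← hν1, mul_one] at hkey hSν
    exact dianandaYapBound_of_le_succ (by omega)
  by_cases hbig : #S + ν ≤ #T * ν
  · exact Or.inl (by omega)
  have hkodd : Odd k := Nat.Odd.of_mul_left (hnk ▸ hn ▸ hodd)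
  rcases hS.image π (not_le.1 hbig) with hT | hT
  · have hkn : k < n := hnk ▸ lt_mul_of_one_lt_right hkodd.pos hν2
    exact hnk ▸ (ih k hkn hkodd hT rfl).mul hSν
  · have hT1 : #T ≤ 1 := (card_le_card hT).trans (card_singleton 0).le
    have hk3 : 3 ≤ k := by
      have h1 : 1 * ν < k * ν := by
        have h2 : 1 * ν ≤ #T * ν := Nat.mul_le_mul_right ν (card_pos.2 (hSne.image π))
        have h3 : 0 < #S := card_pos.2 hSne
        omega
      obtain ⟨r, hr⟩ := hkodd
      have := Nat.lt_of_mul_lt_mul_right h1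
      omega
    have hTν : #T * ν ≤ 1 * ν := Nat.mul_le_mul_right ν hT1
    exact Or.inl (by nlinarith)

lemma Int.even_abs_add_self (a : ℤ) : Even (|a| + a) := by
  rcases abs_choice a with h | h <;> rw [h]
  · exact ⟨a, rfl⟩
  · exact ⟨0, by simp⟩

lemma Int.sum_eq_zero_of_sum_mul_eq_zero {ι : Type*} {s : Finset ι} {c v : ι → ℤ} {a b t : ℤ}
    (hv : ∀ i ∈ s, a ≤ v i ∧ v i ≤ b) (habs : ∑ i ∈ s, |c i| ≤ t) (hab : t * (b - a) < a + b)
    (hrel : ∑ i ∈ s, c i * v i = 0) : ∑ i ∈ s, c i = 0 := by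
  rcases s.eq_empty_or_nonempty with rfl | ⟨i₀, hi₀⟩
  · simp
  have hba : 0 ≤ b - a := by linarith [hv i₀ hi₀]
  have ht : 0 ≤ t := (sum_nonneg fun i _ ↦ abs_nonneg (c i)).trans habs
  -- center the weights: `2 v i - (a + b)` has absolute value at most `b - a`
  have hcenter : (a + b) * ∑ i ∈ s, c i = ∑ i ∈ s, c i * (a + b - 2 * v i) := by
    rw [mul_sum, ← sub_zero (∑ i ∈ s, (a + b) * c i), ← mul_zero 2, ← hrel, mul_sum,
      ← sum_sub_distrib]
    exact sum_congr rfl fun i _ ↦ by ring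
  have hbound : |(a + b) * ∑ i ∈ s, c i| ≤ t * (b - a) := by
    rw [hcenter]
    calc |∑ i ∈ s, c i * (a + b - 2 * v i)| ≤ ∑ i ∈ s, |c i| * (b - a) := by
          refine (abs_sum_le_sum_abs _ _).trans (sum_le_sum fun i hi ↦ ?_)
          rw [abs_mul]
          exact mul_le_mul_of_nonneg_left (abs_le.2 ⟨by linarith [hv i hi], by linarith [hv i hi]⟩)
            (abs_nonneg _)
      _ ≤ t * (b - a) := by rw [← sum_mul]; exact mul_le_mul_of_nonneg_right habs hba
  have hpos : 0 < a + b := (mul_nonneg ht hba).trans_lt hab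
  rw [abs_mul, abs_of_pos hpos] at hbound
  by_contra h
  nlinarith [Int.one_le_abs h]

section Independence

variable {G : Type*} [AddCommGroup G]

lemma eq_zero_of_sum_eq_zero_of_sum_smul_eq_zero {A : Finset G} {c : G → ℤ}
    (habs : ∑ x ∈ A, |c x| ≤ 3) (hsum : ∑ x ∈ A, c x = 0) (hrel : ∑ x ∈ A, c x • x = 0) :
    ∀ x ∈ A, c x = 0 := by
  by_contra! ⟨x₀, hx₀, hcx₀⟩
  classical
  obtain ⟨y, hy, hcy⟩ : ∃ y ∈ A, c y < 0 := by
    by_contra! h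
    exact hcx₀ ((Finset.sum_eq_zero_iff_of_nonneg h).1 hsum x₀ hx₀)
  obtain ⟨x, hx, hcx⟩ : ∃ x ∈ A, 0 < c x := by
    by_contra! h
    exact hcx₀ ((Finset.sum_eq_zero_iff_of_nonpos h).1 hsum x₀ hx₀)
  have hxy : x ≠ y := by rintro rfl; omega
  -- `∑ |c| ≡ ∑ c = 0 (mod 2)`, so `∑ |c| ≤ 2`
  have heven : Even (∑ z ∈ A, |c z|) := by
    have := Finset.even_sum (s := A) _ fun z _ ↦ Int.even_abs_add_self (c z)
    rwa [Finset.sum_add_distrib, hsum, add_zero] at this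
  have hy' : y ∈ A.erase x := mem_erase.2 ⟨hxy.symm, hy⟩
  have hsplit := (Finset.add_sum_erase A (fun z ↦ |c z|) hx).symm
  rw [← Finset.add_sum_erase _ _ hy'] at hsplit
  have hrest := Finset.sum_nonneg fun z (_ : z ∈ (A.erase x).erase y) ↦ abs_nonneg (c z)
  rw [abs_of_pos hcx, abs_of_neg hcy] at hsplit
  obtain ⟨r, hr⟩ := heven
  have hcx1 : c x = 1 := by omega
  have hcy1 : c y = -1 := by omega
  have hzero : ∀ z ∈ A, z ≠ x ∧ z ≠ y → c z = 0 := by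
    intro z hz ⟨hzx, hzy⟩
    have := (Finset.sum_eq_zero_iff_of_nonneg fun z _ ↦ abs_nonneg (c z)).1 (by omega) z
      (mem_erase.2 ⟨hzy, mem_erase.2 ⟨hzx, hz⟩⟩)
    exact abs_eq_zero.1 this
  rw [Finset.sum_eq_add_of_mem x y hx hy hxy fun z hz h ↦ by simp [hzero z hz h], hcx1, hcy1,
    one_smul, neg_one_smul, ← sub_eq_add_neg, sub_eq_zero] at hrel
  exact hxy hrel

lemma IsTIndep.sum_fiber_eq_zero [DecidableEq G] {t : ℕ} {A : Finset G} (hA : IsTIndep t A)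
    {ι : Type*} {s : Finset ι} {f : ι → G} (hf : ∀ i ∈ s, f i ∈ A) {ε : ι → ℤ}
    (habs : ∑ i ∈ s, |ε i| ≤ t) (hrel : ∑ i ∈ s, ε i • f i = 0) (x : G) :
    ∑ i ∈ s with f i = x, ε i = 0 := by
  refine hA (fun x ↦ ∑ i ∈ s with f i = x, ε i) (fun x hx ↦ ?_) ?_ ?_ x
  · exact Finset.sum_eq_zero fun i hi ↦ absurd ((mem_filter.1 hi).2 ▸ hf i (mem_filter.1 hi).1) hx
  · calc ∑ x ∈ A, |∑ i ∈ s with f i = x, ε i|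
        ≤ ∑ x ∈ A, ∑ i ∈ s with f i = x, |ε i| := sum_le_sum fun x _ ↦ abs_sum_le_sum_abs _ _
      _ = ∑ i ∈ s, |ε i| := sum_fiberwise_of_maps_to hf _
      _ ≤ t := habs
  · calc ∑ x ∈ A, (∑ i ∈ s with f i = x, ε i) • x
        = ∑ x ∈ A, ∑ i ∈ s with f i = x, ε i • f i := by
          refine sum_congr rfl fun x _ ↦ ?_
          rw [sum_smul]
          exact sum_congr rfl fun i hi ↦ by rw [(mem_filter.1 hi).2]
      _ = 0 := by rw [sum_fiberwise_of_maps_to hf, hrel]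

lemma IsTIndep.sum_eq_zero [DecidableEq G] {t : ℕ} {A : Finset G} (hA : IsTIndep t A)
    {ι : Type*} {s : Finset ι} {f : ι → G} (hf : ∀ i ∈ s, f i ∈ A) {ε : ι → ℤ}
    (habs : ∑ i ∈ s, |ε i| ≤ t) (hrel : ∑ i ∈ s, ε i • f i = 0) : ∑ i ∈ s, ε i = 0 := by
  rw [← sum_fiberwise_of_maps_to hf]
  exact Finset.sum_eq_zero fun x _ ↦ hA.sum_fiber_eq_zero hf habs hrel x

lemma IsTIndep.preimage {H : Type*} [AddCommGroup H] [Fintype G] [DecidableEq H] {t : ℕ}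
    {I : Finset H} (hI : IsTIndep t I) (ht : t ≤ 3) (π : G →+ H) :
    IsTIndep t {g | π g ∈ I} := by
  intro c hc habs hrel
  have hmaps : ∀ g ∈ ({g | π g ∈ I} : Finset G), π g ∈ I := fun g hg ↦ (mem_filter.1 hg).2
  have hsum : ∑ g ∈ {g | π g ∈ I}, c g = 0 := by
    refine hI.sum_eq_zero hmaps habs ?_
    simp_rw [← map_zsmul, ← map_sum, hrel, map_zero]
  intro x
  by_cases hx : x ∈ ({g | π g ∈ I} : Finset G)
  · exact eq_zero_of_sum_eq_zero_of_sum_smul_eq_zero (habs.trans (by exact_mod_cast ht)) hsum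
      hrel x hx
  · exact hc x hx

lemma IsTIndep.disjoint_neg [DecidableEq G] {A : Finset G} (hA : IsTIndep 3 A) :
    Disjoint A (-A) := by
  rw [disjoint_left]
  intro x hx hx'
  have := hA.sum_eq_zero (s := univ) (f := ![x, -x]) (ε := ![1, 1])
    (by simpa [Fin.forall_fin_two] using ⟨hx, mem_neg'.1 hx'⟩) (by simp) (by simp)
  simp at this

lemma IsTIndep.isSumFree_union_neg [DecidableEq G] {A : Finset G} (hA : IsTIndep 3 A) :
    IsSumFree (A ∪ -A) := by
  have hrep : ∀ x ∈ A ∪ -A, ∃ a ∈ A, ∃ ε : ℤ, (ε = 1 ∨ ε = -1) ∧ ε • a = x := by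
    intro x hx
    rcases mem_union.1 hx with hx | hx
    · exact ⟨x, hx, 1, Or.inl rfl, one_smul ℤ x⟩
    · exact ⟨-x, mem_neg'.1 hx, -1, Or.inr rfl, by simp⟩
  intro x hx y hy hxy
  obtain ⟨a₁, ha₁, ε₁, hε₁, rfl⟩ := hrep x hx
  obtain ⟨a₂, ha₂, ε₂, hε₂, rfl⟩ := hrep y hy
  obtain ⟨a₃, ha₃, ε₃, hε₃, h₃⟩ := hrep _ hxy
  have := hA.sum_eq_zero (s := univ) (f := ![a₁, a₂, a₃]) (ε := ![ε₁, ε₂, -ε₃])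
    (by simpa [Fin.forall_fin_succ] using ⟨ha₁, ha₂, ha₃⟩)
    (by rcases hε₁ with rfl | rfl <;> rcases hε₂ with rfl | rfl <;> rcases hε₃ with rfl | rfl <;>
      simp [Fin.sum_univ_three])
    (by simp [Fin.sum_univ_three, neg_smul, h₃])
  simp only [Fin.sum_univ_three, Matrix.cons_val] at this
  omega

lemma IsTIndep.six_mul_card_le [Fintype G] {A : Finset G} (hA : IsTIndep 3 A)
    (hodd : Odd (Fintype.card G)) {p : ℕ} (hp : 0 < p)
    (hmin : ∀ q, q.Prime → q ∣ Fintype.card G → q % 3 = 2 → p ≤ q) :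
    6 * #A ≤ Fintype.card G + Fintype.card G / p := by
  classical
  have h := (hA.isSumFree_union_neg.dianandaYapBound hodd).le_add_div hp hmin
  rwa [card_union_of_disjoint hA.disjoint_neg, card_neg, ← two_mul, ← mul_assoc] at h

end Independence

lemma isTIndep_three_image_Icc {m p : ℕ} (hp : 6 * m + 3 < p) :
    IsTIndep 3 ((Icc (m + 1) (2 * m + 1)).image (Nat.cast : ℕ → ZMod p)) := by
  have : NeZero p := ⟨by omega⟩
  set I := (Icc (m + 1) (2 * m + 1)).image (Nat.cast : ℕ → ZMod p)
  have hval : ∀ x ∈ I, m + 1 ≤ (x.val : ℤ) ∧ (x.val : ℤ) ≤ 2 * m + 1 := by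
    intro x hx
    obtain ⟨j, hj, rfl⟩ := mem_image.1 hx
    rw [mem_Icc] at hj
    rw [ZMod.val_cast_of_lt (by omega)]
    omega
  intro c hc habs hrel
  -- the relation holds in `ℤ`, since its left side has absolute value at most `3 (2m + 1) < p`
  have hlift : ∑ x ∈ I, c x * (x.val : ℤ) = 0 := by
    refine Int.eq_zero_of_abs_lt_dvd ?_ ?_ (m := p)
    · rw [← ZMod.intCast_zmod_eq_zero_iff_dvd]
      push_cast
      simpa [← zsmul_eq_mul] using hrel
    · calc |∑ x ∈ I, c x * (x.val : ℤ)| ≤ ∑ x ∈ I, |c x| * (2 * m + 1) := by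
            refine (abs_sum_le_sum_abs _ _).trans (sum_le_sum fun x hx ↦ ?_)
            rw [abs_mul, Nat.abs_cast]
            exact mul_le_mul_of_nonneg_left (hval x hx).2 (abs_nonneg _)
        _ ≤ 3 * (2 * m + 1) := by
            rw [← sum_mul]
            exact mul_le_mul_of_nonneg_right habs (by positivity)
        _ < p := by omega
  have hsum : ∑ x ∈ I, c x = 0 :=
    Int.sum_eq_zero_of_sum_mul_eq_zero hval habs (by push_cast; linarith) hlift
  intro x
  by_cases hx : x ∈ I
  · exact eq_zero_of_sum_eq_zero_of_sum_smul_eq_zero habs hsum hrel x hx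
  · exact hc x hx

lemma card_image_Icc_zmod {m p : ℕ} (hp : 2 * m + 1 < p) :
    #((Icc (m + 1) (2 * m + 1)).image (Nat.cast : ℕ → ZMod p)) = m + 1 := by
  rw [card_image_of_injOn, Nat.card_Icc]
  · omega
  · intro i hi j hj hij
    simp only [coe_Icc, Set.mem_Icc] at hi hj
    rw [← ZMod.val_cast_of_lt (n := p) (a := i) (by omega), hij, ZMod.val_cast_of_lt (by omega)]

lemma exists_addMonoidHom_zmod_surjective (G : Type*) [AddCommGroup G] [Finite G] {p : ℕ}
    (hp : p.Prime) (hdvd : p ∣ Nat.card G) : ∃ π : G →+ ZMod p, Function.Surjective π := by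
  obtain ⟨ι, _, n, -, ⟨e⟩⟩ := AddCommGroup.equiv_directSum_zmod_of_finite' G
  let e' := e.trans (DirectSum.addEquivProd _)
  have : p ∣ ∏ i, n i := by
    simpa [Nat.card_congr e'.toEquiv, Nat.card_pi] using hdvd
  obtain ⟨i, -, hi⟩ := (Prime.dvd_finsetProd_iff hp.prime _).1 this
  refine ⟨(ZMod.castHom hi (ZMod p)).toAddMonoidHom.comp
    ((Pi.evalAddMonoidHom (fun i ↦ ZMod (n i)) i).comp e'.toAddMonoidHom), ?_⟩
  exact (ZMod.castHom_surjective hi).comp ((Function.surjective_eval i).comp e'.surjective)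

lemma prime_dvd_exponent_of_dvd_card {G : Type*} [AddCommGroup G] [Fintype G] {q : ℕ}
    (hq : q.Prime) (hqG : q ∣ Fintype.card G) : q ∣ AddMonoid.exponent G := by
  have : Fact q.Prime := ⟨hq⟩
  obtain ⟨g, hg⟩ := exists_prime_addOrderOf_dvd_card q hqG
  exact hg ▸ AddMonoid.addOrder_dvd_exponent g

lemma odd_card_of_odd_exponent {G : Type*} [AddCommGroup G] [Fintype G]
    (h : Odd (AddMonoid.exponent G)) : Odd (Fintype.card G) := by
  rw [← Nat.not_even_iff_odd, even_iff_two_dvd]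
  exact fun h2 ↦ Nat.not_even_iff_odd.2 h
    (even_iff_two_dvd.2 (prime_dvd_exponent_of_dvd_card Nat.prime_two h2))

lemma sIndep_eq_of_isGreatest {G : Type*} [AddCommGroup G] {t M : ℕ}
    (hM : ∃ A : Finset G, IsTIndep t A ∧ #A = M) (hle : ∀ A : Finset G, IsTIndep t A → #A ≤ M) :
    sIndep G t = M :=
  IsGreatest.csSup_eq ⟨hM, by rintro _ ⟨A, hA, rfl⟩; exact hle A hA⟩

theorem stmt13_general {G : Type*} [AddCommGroup G] [Fintype G]
    (hκ : Odd (AddMonoid.exponent G))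
    (p : ℕ) (hp : p.Prime) (hpdvd : p ∣ AddMonoid.exponent G) (hp5 : p % 6 = 5)
    (hmin : ∀ q : ℕ, q.Prime → q ∣ AddMonoid.exponent G → q % 6 = 5 → p ≤ q) :
    (sIndep G 3 : ℚ) = (1 + 1 / (p : ℚ)) * (Fintype.card G : ℚ) / 6 := by
  classical
  have hodd := odd_card_of_odd_exponent hκ
  have hmin' : ∀ q, q.Prime → q ∣ Fintype.card G → q % 3 = 2 → p ≤ q := by
    intro q hq hqG hq3
    have : q % 2 = 1 := Nat.odd_iff.1 (hodd.of_dvd_nat hqG)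
    exact hmin q hq (prime_dvd_exponent_of_dvd_card hq hqG) (by omega)
  obtain ⟨π, hπ⟩ := exists_addMonoidHom_zmod_surjective G hp
    (Nat.card_eq_fintype_card (α := G) ▸ hpdvd.trans AddGroup.exponent_dvd_card)
  obtain ⟨m, rfl⟩ : ∃ m, p = 6 * m + 5 := ⟨p / 6, by omega⟩
  have hn : Fintype.card G = (6 * m + 5) * #{g | π g = 0} := by
    simpa using card_filter_mem_eq_mul π hπ univ
  have hs : sIndep G 3 = (m + 1) * #{g | π g = 0} := by
    refine sIndep_eq_of_isGreatest
      ⟨_, (isTIndep_three_image_Icc (m := m) (by omega)).preimage le_rfl π, ?_⟩ fun A hA ↦ ?_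
    · rw [card_filter_mem_eq_mul π hπ, card_image_Icc_zmod (by omega)]
    · have := hA.six_mul_card_le hodd (by omega) hmin'
      rw [hn, Nat.mul_div_cancel_left _ (by omega)] at this
      nlinarith
  rw [hs, hn]
  push_cast
  field_simp
  ring

theorem stmt13 {G : Type*} [AddCommGroup G] [Fintype G]
    (hn : 2 ≤ Fintype.card G) (hκ : Odd (AddMonoid.exponent G))
    (p : ℕ) (hp : p.Prime) (hpdvd : p ∣ AddMonoid.exponent G) (hp5 : p % 6 = 5)
    (hmin : ∀ q : ℕ, q.Prime → q ∣ AddMonoid.exponent G → q % 6 = 5 → p ≤ q) :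
    (sIndep G 3 : ℚ) = (1 + 1 / (p : ℚ)) * (Fintype.card G : ℚ) / 6 :=
  stmt13_general hκ p hp hpdvd hp5 hmin
end
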